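/- In the construction for the (⇒) direction of Lemma 3.1, if ȳ ∈ W̄′ ∩ R̄^{≤md φ}(ū), then 𝔉, ȳ ⊨ᵛ B. (Sublemma 3.2) -/

import Mathlib

namespace ModalProducts

/-- `N`-modal formulas over propositional variables indexed by `ℕ`
(the variable `pₖ` is `var k`; the extra variable `p` is `var 0`). -/
inductive MF (N : ℕ) : Type
  | var : ℕ → MF N
  | bot : MF N
  | and : MF N → MF N → MF N
  | or  : MF N → MF N → MF N
  | imp : MF N → MF N → MF N
  | box : Fin N → MF N → MF N
deriving DecidableEq

namespace MF

variable {N : ℕ}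

/-- negation: `¬ψ = ψ → ⊥`. -/
def neg (φ : MF N) : MF N := imp φ bot

/-- diamond: `◇ᵢψ = ¬□ᵢ¬ψ`. -/
def dia (i : Fin N) (φ : MF N) : MF N := neg (box i (neg φ))

/-- modal depth. -/
def md : MF N → ℕ
  | var _ => 0
  | bot => 0
  | and φ ψ => max (md φ) (md ψ)
  | or φ ψ => max (md φ) (md ψ)
  | imp φ ψ => max (md φ) (md ψ)
  | box _ φ => md φ + 1

/-- length (number of symbols; the variable `pₖ` counts as `k+1` symbols,
accounting for the subscript). -/
def len : MF N → ℕ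
  | var q => q + 1
  | bot => 1
  | and φ ψ => len φ + len ψ + 1
  | or φ ψ => len φ + len ψ + 1
  | imp φ ψ => len φ + len ψ + 1
  | box _ φ => len φ + 1

/-- the set of propositional variables occurring in a formula. -/
def vars : MF N → Set ℕ
  | var q => {q}
  | bot => ∅
  | and φ ψ => vars φ ∪ vars ψ
  | or φ ψ => vars φ ∪ vars ψ
  | imp φ ψ => vars φ ∪ vars ψ
  | box _ φ => vars φ

/-- the largest index of a variable occurring in a formula (0 if none). -/
def maxVar : MF N → ℕ
  | var q => q
  | bot => 0
  | and φ ψ => max (maxVar φ) (maxVar ψ)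
  | or φ ψ => max (maxVar φ) (maxVar ψ)
  | imp φ ψ => max (maxVar φ) (maxVar ψ)
  | box _ φ => maxVar φ

/-- the list of subformulas of a formula. -/
def subfs : MF N → List (MF N)
  | var q => [var q]
  | bot => [bot]
  | and φ ψ => and φ ψ :: (subfs φ ++ subfs ψ)
  | or φ ψ => or φ ψ :: (subfs φ ++ subfs ψ)
  | imp φ ψ => imp φ ψ :: (subfs φ ++ subfs ψ)
  | box i φ => box i φ :: subfs φ

/-- uniform substitution of formulas for variables. -/
def subst (s : ℕ → MF N) : MF N → MF N
  | var q => s q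
  | bot => bot
  | and φ ψ => and (subst s φ) (subst s ψ)
  | or φ ψ => or (subst s φ) (subst s ψ)
  | imp φ ψ => imp (subst s φ) (subst s ψ)
  | box i φ => box i (subst s φ)

end MF

/-- `θ` is a subformula of `φ`. -/
def Subformula {N : ℕ} (θ φ : MF N) : Prop := θ ∈ φ.subfs

/-- A Kripke `N`-frame: a nonempty set of points with `N` accessibility relations. -/
structure Frame (N : ℕ) where
  W : Type
  nonempty : Nonempty W
  R : Fin N → W → W → Prop

/-- Truth of a formula at a point of a frame under a valuation. -/
def Sat {N : ℕ} (F : Frame N) (v : ℕ → Set F.W) : F.W → MF N → Prop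
  | x, .var q => x ∈ v q
  | _, .bot => False
  | x, .and φ ψ => Sat F v x φ ∧ Sat F v x ψ
  | x, .or φ ψ => Sat F v x φ ∨ Sat F v x ψ
  | x, .imp φ ψ => Sat F v x φ → Sat F v x ψ
  | x, .box i φ => ∀ y, F.R i x y → Sat F v y φ

/-- Validity of a formula in a frame: truth at every point under every valuation. -/
def Valid {N : ℕ} (F : Frame N) (φ : MF N) : Prop := ∀ (v : ℕ → Set F.W) (x : F.W), Sat F v x φ

/-- A set of formulas is valid in a frame if all of its members are. -/
def ValidSet {N : ℕ} (F : Frame N) (L : Set (MF N)) : Prop := ∀ φ ∈ L, Valid F φ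

/-- The logic of a class of frames. -/
def Logic {N : ℕ} (C : Set (Frame N)) : Set (MF N) := {φ | ∀ F ∈ C, Valid F φ}

/-- A logic is Kripke complete if it is the logic of some nonempty class of frames. -/
def KripkeComplete {N : ℕ} (L : Set (MF N)) : Prop :=
  ∃ C : Set (Frame N), C.Nonempty ∧ L = Logic C

/-- The product of `N` 1-frames. -/
def prodFrame {N : ℕ} (Fs : Fin N → Frame 1) : Frame N where
  W := ∀ j, (Fs j).W
  nonempty := ⟨fun i => (Fs i).nonempty.some⟩
  R := fun i x y => (Fs i).R 0 (x i) (y i) ∧ ∀ k, k ≠ i → x k = y k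

/-- The product of `N` Kripke complete monomodal logics: the logic of the class of
products of frames of the factors. -/
def productLogic {N : ℕ} (Ls : Fin N → Set (MF 1)) : Set (MF N) :=
  Logic {F | ∃ Fs : Fin N → Frame 1, (∀ i, ValidSet (Fs i) (Ls i)) ∧ F = prodFrame Fs}

/-- A 1-frame is reflexive. -/
def ReflexiveFrame (F : Frame 1) : Prop := ∀ x, F.R 0 x x

/-- The logic `T` of all reflexive 1-frames. -/
def logicT : Set (MF 1) := Logic {F | ReflexiveFrame F}

/-- The logic `K` of all 1-frames. -/
def logicK : Set (MF 1) := Logic Set.univ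

/-- The logic `S5` of all 1-frames whose relation is an equivalence. -/
def logicS5 : Set (MF 1) := Logic {F | Equivalence (F.R 0)}

section Translation

variable {n : ℕ}

/-- the variable `p`. -/
def pv : MF (n+1) := .var 0

/-- `◆₁ψ = ◇₁(¬p ∧ ◇₁(p ∧ ψ))`. -/
def blackDia (ψ : MF (n+1)) : MF (n+1) :=
  MF.dia 0 (.and (MF.neg pv) (MF.dia 0 (.and pv ψ)))

/-- `α_k = ◆₁ᵏ □₁ p`. -/
def alphaF (k : ℕ) : MF (n+1) := blackDia^[k] (.box 0 pv)

/-- `β_k = ¬p ∧ ◇₁(p ∧ α_k)`. -/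
def betaF (k : ℕ) : MF (n+1) := .and (MF.neg pv) (MF.dia 0 (.and pv (alphaF k)))

/-- `B = β_{m+1}`. -/
def Bf (m : ℕ) : MF (n+1) := betaF (m+1)

/-- The translation `σ`: `σ(p_k) = β_k`, `σ(⊥) = ⊥`, `σ` commutes with `∧, ∨, →`,
and `σ(□ᵢψ) = □ᵢ(B → σ(ψ))`. -/
def sigmaT (m : ℕ) : MF (n+1) → MF (n+1)
  | .var k => betaF k
  | .bot => .bot
  | .and φ ψ => .and (sigmaT m φ) (sigmaT m ψ)
  | .or φ ψ => .or (sigmaT m φ) (sigmaT m ψ)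
  | .imp φ ψ => .imp (sigmaT m φ) (sigmaT m ψ)
  | .box i φ => .box i (.imp (Bf m) (sigmaT m φ))

/-- conjunction of a head formula with a list of formulas. -/
def bigAnd (ψ : MF (n+1)) (l : List (MF (n+1))) : MF (n+1) := l.foldl .and ψ

/-- `□^{≤k}`: `□^{≤0}ψ = ψ`, `□^{≤k+1}ψ = □^{≤k}ψ ∧ □₁□^{≤k}ψ ∧ … ∧ □ₙ□^{≤k}ψ`. -/
def boxLe : ℕ → MF (n+1) → MF (n+1)
  | 0, ψ => ψ
  | k+1, ψ => bigAnd (boxLe k ψ) (List.ofFn fun i : Fin (n+1) => .box i (boxLe k ψ))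

/-- `□₋₁^{≤k}`: like `□^{≤k}` but using only `□₂, …, □ₙ`. -/
def boxLeTail : ℕ → MF (n+1) → MF (n+1)
  | 0, ψ => ψ
  | k+1, ψ => bigAnd (boxLeTail k ψ) (List.ofFn fun i : Fin n => .box i.succ (boxLeTail k ψ))

/-- `◇₋₁^{≤k}ψ = ¬□₋₁^{≤k}¬ψ`. -/
def diaLeTail (k : ℕ) (ψ : MF (n+1)) : MF (n+1) := MF.neg (boxLeTail k (MF.neg ψ))

/-- `A = B ∧ □^{≤md φ}(B → □₋₁^{≤md φ}B) ∧ □^{≤md φ}(◇₋₁^{≤md φ}B → B)`. -/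
def Af (m : ℕ) (φ : MF (n+1)) : MF (n+1) :=
  .and (Bf m)
    (.and (boxLe φ.md (.imp (Bf m) (boxLeTail φ.md (Bf m))))
          (boxLe φ.md (.imp (diaLeTail φ.md (Bf m)) (Bf m))))

end Translation

end ModalProducts
namespace ModalProducts

section Restriction

variable {n : ℕ}

/-- `R̄^{≤k}`: `R̄^{≤0}` is the identity, and
`R̄^{≤k+1} = R̄^{≤k} ∪ R̄₁ ∘ R̄^{≤k} ∪ … ∪ R̄ₙ ∘ R̄^{≤k}`
(reachability in at most `k` steps along the relations of the frame). -/
def RleAll {N : ℕ} (F : Frame N) : ℕ → F.W → F.W → Prop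
  | 0 => fun x y => x = y
  | k+1 => fun x y => RleAll F k x y ∨ ∃ (i : Fin N) (z : F.W), F.R i x z ∧ RleAll F k z y

/-- `R̄₋₁^{≤k}`: reachability in at most `k` steps along `R̄₂, …, R̄ₙ` only. -/
def RleTail (F : Frame (n+1)) : ℕ → F.W → F.W → Prop
  | 0 => fun x y => x = y
  | k+1 => fun x y =>
      RleTail F k x y ∨ ∃ (i : Fin n) (z : F.W), F.R i.succ x z ∧ RleTail F k z y

/-- The set `W′₁ = {x₁ ∈ W₁ : 𝔉, x̄ ⊨ᵛ B and x̄ ∈ R̄^{≤d}(ū)` for some `x̄ ∈ W̄` with first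
coordinate `x₁}`. -/
def restrSet (Fs : Fin (n+1) → Frame 1) (m d : ℕ) (v : ℕ → Set (prodFrame Fs).W)
    (u : (prodFrame Fs).W) : Set (Fs 0).W :=
  {x1 | ∃ x : (prodFrame Fs).W, x 0 = x1 ∧ Sat (prodFrame Fs) v x (Bf m) ∧
        RleAll (prodFrame Fs) d u x}

/-- The subframe of a 1-frame induced by a nonempty set of points
(the relation is restricted to the set). -/
def subFrame1 (F1 : Frame 1) (S : Set F1.W) (hS : S.Nonempty) : Frame 1 where
  W := S
  nonempty := ⟨⟨hS.choose, hS.choose_spec⟩⟩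
  R := fun i x y => F1.R i x.val y.val

/-- The factors of the restricted product `𝔉′ = 𝔉′₁ × 𝔉₂ × … × 𝔉ₙ`,
where `𝔉′₁ = ⟨W′₁, R₁ ↾ W′₁⟩`. -/
def restrFactors (Fs : Fin (n+1) → Frame 1) (m d : ℕ) (v : ℕ → Set (prodFrame Fs).W)
    (u : (prodFrame Fs).W) (hS : (restrSet Fs m d v u).Nonempty) : Fin (n+1) → Frame 1 :=
  Fin.cases (subFrame1 (Fs 0) (restrSet Fs m d v u) hS) (fun i => Fs i.succ)

/-- The restricted product frame `𝔉′ = 𝔉′₁ × 𝔉₂ × … × 𝔉ₙ`. -/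
def restrFrame (Fs : Fin (n+1) → Frame 1) (m d : ℕ) (v : ℕ → Set (prodFrame Fs).W)
    (u : (prodFrame Fs).W) (hS : (restrSet Fs m d v u).Nonempty) : Frame (n+1) :=
  prodFrame (restrFactors Fs m d v u hS)

/-- The natural inclusion `W̄′ ⊆ W̄` of the points of `𝔉′` among those of `𝔉`. -/
def restrEmb (Fs : Fin (n+1) → Frame 1) (m d : ℕ) (v : ℕ → Set (prodFrame Fs).W)
    (u : (prodFrame Fs).W) (hS : (restrSet Fs m d v u).Nonempty)
    (y : (restrFrame Fs m d v u hS).W) : (prodFrame Fs).W :=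
  Fin.cases (motive := fun i => (Fs i).W) (y 0).val (fun i => y i.succ)

/-- A point `x̄ ∈ W̄` whose first coordinate lies in `W′₁`, viewed as a point of `W̄′`. -/
def mkRestrPt (Fs : Fin (n+1) → Frame 1) (m d : ℕ) (v : ℕ → Set (prodFrame Fs).W)
    (u : (prodFrame Fs).W) (hS : (restrSet Fs m d v u).Nonempty)
    (x : (prodFrame Fs).W) (hx : x 0 ∈ restrSet Fs m d v u) :
    (restrFrame Fs m d v u hS).W :=
  Fin.cases (motive := fun i => ((restrFactors Fs m d v u hS) i).W)
    ⟨x 0, hx⟩ (fun i => x i.succ)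

end Restriction

end ModalProducts

open ModalProducts

/-!
Steps of a product frame along different coordinates commute, so a path of length at most `d`
from `ū` to `x̄` can be rearranged to move first along the first coordinate, reaching
`w̄ = ū[0 ↦ x₁]`, and then only along the others. Take `x̄ ⊨ B` witnessing `y₁ ∈ W′₁`. Then
`w̄ ⊨ ◇₋₁^{≤d} B`, so `w̄ ⊨ B` by the third conjunct of `A` and `w̄ ⊨ □₋₁^{≤d} B` by the second;
and `ȳ` is reached from the same `w̄` along the other coordinates, hence `ȳ ⊨ B`.
-/

namespace ModalProducts

section Reachability

variable {N : ℕ} {Fs : Fin N → Frame 1}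

theorem prodFrame_R_update {i : Fin N} {u : ∀ j, (Fs j).W} {c : (Fs i).W}
    (h : (Fs i).R 0 (u i) c) : (prodFrame Fs).R i u (Function.update u i c) :=
  ⟨by simpa using h, fun _ hk => (Function.update_of_ne hk _ _).symm⟩

theorem update_eq_update_of_prodFrame_R {i : Fin N} {u z : ∀ j, (Fs j).W}
    (h : (prodFrame Fs).R i u z) (c : (Fs i).W) :
    Function.update u i c = Function.update z i c := by
  funext k
  rcases eq_or_ne k i with rfl | hk
  · simp
  · simp [Function.update_of_ne hk, h.2 k hk]

theorem prodFrame_R_update_update {i k : Fin N} {u z : ∀ j, (Fs j).W}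
    (h : (prodFrame Fs).R i u z) (hk : k ≠ i) (c : (Fs k).W) :
    (prodFrame Fs).R i (Function.update u k c) (Function.update z k c) := by
  refine ⟨by simpa [Function.update_of_ne hk.symm] using h.1, fun j hj => ?_⟩
  rcases eq_or_ne j k with rfl | hjk
  · simp
  · simp [Function.update_of_ne hjk, h.2 j hj]

theorem RleAll.prodFrame_update {i : Fin N} {k : ℕ} {u : ∀ j, (Fs j).W} {c : (Fs i).W}
    (h : RleAll (Fs i) k (u i) c) : RleAll (prodFrame Fs) k u (Function.update u i c) := by
  induction k generalizing u with
  | zero =>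
    cases h
    exact (Function.update_eq_self i u).symm
  | succ k ih =>
    rcases h with h | ⟨j, z, hR, hz⟩
    · exact Or.inl (ih h)
    · obtain rfl : j = 0 := Subsingleton.elim _ _
      refine Or.inr ⟨i, Function.update u i z, prodFrame_R_update hR, ?_⟩
      simpa using ih (u := Function.update u i z) (by simpa using hz)

theorem RleAll.prodFrame_split {n k : ℕ} {Fs : Fin (n+1) → Frame 1} {u x : ∀ j, (Fs j).W}
    (h : RleAll (prodFrame Fs) k u x) :
    RleAll (Fs 0) k (u 0) (x 0) ∧ RleTail (prodFrame Fs) k (Function.update u 0 (x 0)) x := by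
  induction k generalizing u with
  | zero =>
    cases h
    exact ⟨rfl, Function.update_eq_self 0 _⟩
  | succ k ih =>
    rcases h with h | ⟨i, z, hR, hz⟩
    · exact (ih h).imp Or.inl Or.inl
    obtain ⟨hz0, hzx⟩ := ih hz
    rcases Fin.eq_zero_or_eq_succ i with rfl | ⟨j, rfl⟩
    · rw [update_eq_update_of_prodFrame_R hR]
      exact ⟨Or.inr ⟨0, z 0, hR.1, hz0⟩, Or.inl hzx⟩
    · rw [← hR.2 0 (Fin.succ_ne_zero j).symm] at hz0
      exact ⟨Or.inl hz0,
        Or.inr ⟨j, _, prodFrame_R_update_update hR (Fin.succ_ne_zero j).symm _, hzx⟩⟩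

end Reachability

section Semantics

variable {n : ℕ} {F : Frame (n+1)} {v : ℕ → Set F.W}

theorem sat_bigAnd {x : F.W} (ψ : MF (n+1)) (l : List (MF (n+1))) :
    Sat F v x (bigAnd ψ l) ↔ Sat F v x ψ ∧ ∀ χ ∈ l, Sat F v x χ := by
  induction l generalizing ψ with
  | nil => simp [bigAnd]
  | cons a l ih =>
    change Sat F v x (bigAnd (ψ.and a) l) ↔ _
    rw [ih]
    simp only [Sat, List.mem_cons, forall_eq_or_imp, and_assoc]

theorem Sat.of_boxLe {ψ : MF (n+1)} {k : ℕ} {x y : F.W}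
    (h : Sat F v x (boxLe k ψ)) (hxy : RleAll F k x y) : Sat F v y ψ := by
  induction k generalizing x with
  | zero => cases hxy; exact h
  | succ k ih =>
    obtain ⟨hk, hboxes⟩ := (sat_bigAnd _ _).1 h
    rcases hxy with hxy | ⟨i, z, hxz, hzy⟩
    · exact ih hk hxy
    · exact ih (hboxes _ (List.mem_ofFn.2 ⟨i, rfl⟩) z hxz) hzy

theorem Sat.of_boxLeTail {ψ : MF (n+1)} {k : ℕ} {x y : F.W}
    (h : Sat F v x (boxLeTail k ψ)) (hxy : RleTail F k x y) : Sat F v y ψ := by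
  induction k generalizing x with
  | zero => cases hxy; exact h
  | succ k ih =>
    obtain ⟨hk, hboxes⟩ := (sat_bigAnd _ _).1 h
    rcases hxy with hxy | ⟨i, z, hxz, hzy⟩
    · exact ih hk hxy
    · exact ih (hboxes _ (List.mem_ofFn.2 ⟨i, rfl⟩) z hxz) hzy

theorem Sat.diaLeTail_of_rleTail {ψ : MF (n+1)} {k : ℕ} {x y : F.W}
    (hy : Sat F v y ψ) (hxy : RleTail F k x y) : Sat F v x (diaLeTail k ψ) :=
  fun hbox => (hbox.of_boxLeTail hxy : Sat F v y (MF.neg ψ)) hy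

end Semantics

end ModalProducts

theorem sublemma_3_2_general (n m : ℕ) (φ : MF (n+1))
    (Fs : Fin (n+1) → Frame 1)
    (v : ℕ → Set (prodFrame Fs).W)
    (u : (prodFrame Fs).W) (hA : Sat (prodFrame Fs) v u (Af m φ))
    (y : (prodFrame Fs).W)
    (hy1 : y 0 ∈ restrSet Fs m φ.md v u)
    (hy2 : RleAll (prodFrame Fs) φ.md u y) :
    Sat (prodFrame Fs) v y (Bf m) := by
  obtain ⟨x, hxy, hxB, hux⟩ := hy1
  obtain ⟨-, hAB, hAdia⟩ := hA
  obtain ⟨hux0, hwx⟩ := hux.prodFrame_split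
  rw [hxy] at hux0 hwx
  set w := Function.update u 0 (y 0)
  have huw : RleAll (prodFrame Fs) φ.md u w := hux0.prodFrame_update
  have hwB : Sat (prodFrame Fs) v w (Bf m) :=
    hAdia.of_boxLe huw (hxB.diaLeTail_of_rleTail hwx)
  exact (hAB.of_boxLe huw hwB).of_boxLeTail hy2.prodFrame_split.2

/-- **Sublemma 3.2.** In the construction for direction (⇒) of Lemma 3.1: if
`ȳ ∈ W̄′ ∩ R̄^{≤md φ}(ū)` (i.e. the first coordinate of `ȳ` lies in `W′₁` and `ȳ` is
reachable from `ū` in at most `md φ` steps), then `𝔉, ȳ ⊨ᵛ B`. -/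
theorem sublemma_3_2 (n m : ℕ) (φ : MF (n+1))
    (hvars : ∀ q ∈ φ.vars, 1 ≤ q ∧ q ≤ m)
    (Fs : Fin (n+1) → Frame 1) (hrefl : ReflexiveFrame (Fs 0))
    (v : ℕ → Set (prodFrame Fs).W)
    (u : (prodFrame Fs).W) (hA : Sat (prodFrame Fs) v u (Af m φ))
    (y : (prodFrame Fs).W)
    (hy1 : y 0 ∈ restrSet Fs m φ.md v u)
    (hy2 : RleAll (prodFrame Fs) φ.md u y) :
    Sat (prodFrame Fs) v y (Bf m) :=
  sublemma_3_2_general n m φ Fs v u hA y hy1 hy2
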